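/- arXiv:1909.12296 — 2 statements merged into one kernel-verified Lean document; each statement's English description precedes it below -/
import Mathlib

section
/- Let M be an n×n Hermitian complex matrix with eigenvalues μ₁ ≥ ... ≥ μₙ, and let M' be a principal submatrix of M of size (n−1)×(n−1) with eigenvalues ν₁ ≥ ... ≥ ν_{n−1}. Then the eigenvalues interlace: μᵢ ≥ νᵢ ≥ μ_{i+1} for all 1 ≤ i ≤ n−1. -/
open Polynomial Matrix Module

open scoped InnerProductSpace ComplexConjugate

/-!
Courant–Fischer by a dimension count. The principal submatrix is `M' = Pᴴ M P` for the isometric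
inclusion `P : ℂⁿ → ℂⁿ⁺¹` that leaves out coordinate `k`; let `v`, `w` be orthonormal eigenbases of
`M`, `M'` listed in the order of `μ`, `ν`. On the span of `v_i, …, v_n` we have `x* M x ≤ μ_i ‖x‖²`,
on the span of `w_0, …, w_i` we have `ν_i ‖y‖² ≤ y* M' y`, and since the dimensions add up to
`n + 2` the first span contains `P y` for some `y ≠ 0` in the second. Then
`ν_i ‖y‖² ≤ y* M' y = (P y)* M (P y) ≤ μ_i ‖y‖²`. Reversing all inequalities gives `μ_{i+1} ≤ ν_i`.
-/

section EigenvectorSpan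

variable {𝕜 E ι : Type*} [RCLike 𝕜] [NormedAddCommGroup E] [InnerProductSpace 𝕜 E]
  {T : E →ₗ[𝕜] E} {v : ι → E} {μ : ι → ℝ}

theorem Orthonormal.re_inner_map_sum_smul (hv : Orthonormal 𝕜 v)
    (hT : ∀ i, T (v i) = (μ i : 𝕜) • v i)
    (s : Finset ι) (c : ι → 𝕜) :
    RCLike.re ⟪T (∑ i ∈ s, c i • v i), ∑ i ∈ s, c i • v i⟫_𝕜 = ∑ i ∈ s, μ i * ‖c i‖ ^ 2 := by
  have hTsum : T (∑ i ∈ s, c i • v i) = ∑ i ∈ s, ((μ i : 𝕜) * c i) • v i := by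
    simp only [map_sum, map_smul, hT, smul_smul, mul_comm]
  have hterm : ∀ i, conj ((μ i : 𝕜) * c i) * c i = ((μ i * ‖c i‖ ^ 2 : ℝ) : 𝕜) := fun i => by
    rw [map_mul, RCLike.conj_ofReal, mul_assoc, RCLike.conj_mul]
    push_cast
    rfl
  simp_rw [hTsum, hv.inner_sum, hterm, ← RCLike.ofReal_sum, RCLike.ofReal_re]

theorem Orthonormal.norm_sum_smul_sq (hv : Orthonormal 𝕜 v) (s : Finset ι) (c : ι → 𝕜) :
    ‖∑ i ∈ s, c i • v i‖ ^ 2 = ∑ i ∈ s, ‖c i‖ ^ 2 := by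
  simpa [← inner_self_eq_norm_sq] using
    hv.re_inner_map_sum_smul (T := LinearMap.id) (μ := 1) (by simp) s c

theorem Orthonormal.re_inner_map_self_le_of_mem_span (hv : Orthonormal 𝕜 v)
    (hT : ∀ i, T (v i) = (μ i : 𝕜) • v i) {s : Finset ι} {b : ℝ} (hs : ∀ i ∈ s, μ i ≤ b)
    {x : E} (hx : x ∈ Submodule.span 𝕜 (v '' s)) :
    RCLike.re ⟪T x, x⟫_𝕜 ≤ b * ‖x‖ ^ 2 := by
  obtain ⟨c, rfl⟩ := (Submodule.mem_span_image_finset_iff_exists_fun' 𝕜).mp hx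
  rw [hv.re_inner_map_sum_smul hT, hv.norm_sum_smul_sq, Finset.mul_sum]
  exact Finset.sum_le_sum fun i hi => mul_le_mul_of_nonneg_right (hs i hi) (by positivity)

theorem Orthonormal.le_re_inner_map_self_of_mem_span (hv : Orthonormal 𝕜 v)
    (hT : ∀ i, T (v i) = (μ i : 𝕜) • v i) {s : Finset ι} {a : ℝ} (hs : ∀ i ∈ s, a ≤ μ i)
    {x : E} (hx : x ∈ Submodule.span 𝕜 (v '' s)) :
    a * ‖x‖ ^ 2 ≤ RCLike.re ⟪T x, x⟫_𝕜 := by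
  obtain ⟨c, rfl⟩ := (Submodule.mem_span_image_finset_iff_exists_fun' 𝕜).mp hx
  rw [hv.re_inner_map_sum_smul hT, hv.norm_sum_smul_sq, Finset.mul_sum]
  exact Finset.sum_le_sum fun i hi => mul_le_mul_of_nonneg_right (hs i hi) (by positivity)

theorem Orthonormal.finrank_span_image_finset (hv : Orthonormal 𝕜 v) (s : Finset ι) :
    finrank 𝕜 (Submodule.span 𝕜 (v '' s)) = s.card := by
  rw [Set.image_eq_range, ← Fintype.card_coe s]
  exact finrank_span_eq_card (hv.linearIndependent.comp _ Subtype.val_injective)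

end EigenvectorSpan

namespace LinearIsometry

variable {𝕜 E F : Type*} [RCLike 𝕜] [NormedAddCommGroup E] [InnerProductSpace 𝕜 E]
  [NormedAddCommGroup F] [InnerProductSpace 𝕜 F] [FiniteDimensional 𝕜 E]

theorem exists_ne_zero_mem_of_finrank_lt (V : F →ₗᵢ[𝕜] E) {U : Submodule 𝕜 E}
    {W : Submodule 𝕜 F} (hdim : finrank 𝕜 E < finrank 𝕜 U + finrank 𝕜 W) :
    ∃ y ∈ W, V y ∈ U ∧ y ≠ 0 := by
  have hVW : finrank 𝕜 (W.map V.toLinearMap) = finrank 𝕜 W :=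
    (Submodule.equivMapOfInjective _ V.injective W).finrank_eq.symm
  have hU : ¬Disjoint U (W.map V.toLinearMap) := fun h =>
    (Submodule.finrank_add_finrank_le_of_disjoint h).not_gt (hVW ▸ hdim)
  obtain ⟨x, hxU, ⟨y, hy, rfl⟩, hx⟩ : ∃ x ∈ U, x ∈ W.map V.toLinearMap ∧ x ≠ 0 := by
    simpa [Submodule.disjoint_def] using hU
  exact ⟨y, hy, hxU, fun h => hx (by simp [h])⟩

variable {T : E →ₗ[𝕜] E} {S : F →ₗ[𝕜] F}

theorem le_of_compression_of_le_of_ge (V : F →ₗᵢ[𝕜] E) (hST : ∀ y, ⟪S y, y⟫_𝕜 = ⟪T (V y), V y⟫_𝕜)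
    {U : Submodule 𝕜 E} {W : Submodule 𝕜 F} (hdim : finrank 𝕜 E < finrank 𝕜 U + finrank 𝕜 W)
    {a b : ℝ} (hU : ∀ x ∈ U, RCLike.re ⟪T x, x⟫_𝕜 ≤ b * ‖x‖ ^ 2)
    (hW : ∀ y ∈ W, a * ‖y‖ ^ 2 ≤ RCLike.re ⟪S y, y⟫_𝕜) :
    a ≤ b := by
  obtain ⟨y, hyW, hyU, hy⟩ := V.exists_ne_zero_mem_of_finrank_lt hdim
  have key := (hW y hyW).trans_eq (congrArg RCLike.re (hST y)) |>.trans (hU _ hyU)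
  rw [V.norm_map] at key
  exact le_of_mul_le_mul_right key (by positivity)

theorem le_of_compression_of_ge_of_le (V : F →ₗᵢ[𝕜] E) (hST : ∀ y, ⟪S y, y⟫_𝕜 = ⟪T (V y), V y⟫_𝕜)
    {U : Submodule 𝕜 E} {W : Submodule 𝕜 F} (hdim : finrank 𝕜 E < finrank 𝕜 U + finrank 𝕜 W)
    {a b : ℝ} (hU : ∀ x ∈ U, a * ‖x‖ ^ 2 ≤ RCLike.re ⟪T x, x⟫_𝕜)
    (hW : ∀ y ∈ W, RCLike.re ⟪S y, y⟫_𝕜 ≤ b * ‖y‖ ^ 2) :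
    a ≤ b := by
  have := V.le_of_compression_of_le_of_ge (T := -T) (S := -S) (a := -b) (b := -a)
    (fun y => by simp [hST]) hdim
    (fun x hx => by simpa [inner_neg_left] using hU x hx)
    (fun y hy => by simpa [inner_neg_left] using hW y hy)
  linarith

theorem interlacing_of_compression {n : ℕ} (V : F →ₗᵢ[𝕜] E)
    (hST : ∀ y, ⟪S y, y⟫_𝕜 = ⟪T (V y), V y⟫_𝕜) (hE : finrank 𝕜 E = n + 1)
    {v : Fin (n + 1) → E} (hv : Orthonormal 𝕜 v) {μ : Fin (n + 1) → ℝ} (hμ : Antitone μ)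
    (hTv : ∀ i, T (v i) = (μ i : 𝕜) • v i)
    {w : Fin n → F} (hw : Orthonormal 𝕜 w) {ν : Fin n → ℝ} (hν : Antitone ν)
    (hSw : ∀ i, S (w i) = (ν i : 𝕜) • w i) (i : Fin n) :
    ν i ≤ μ i.castSucc ∧ μ i.succ ≤ ν i := by
  constructor
  · refine V.le_of_compression_of_le_of_ge hST (U := Submodule.span 𝕜 (v '' Finset.Ici i.castSucc))
      (W := Submodule.span 𝕜 (w '' Finset.Iic i)) ?_
      (fun x hx => hv.re_inner_map_self_le_of_mem_span hTv
        (fun j hj => hμ (Finset.mem_Ici.mp hj)) hx)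
      (fun y hy => hw.le_re_inner_map_self_of_mem_span hSw
        (fun j hj => hν (Finset.mem_Iic.mp hj)) hy)
    rw [hv.finrank_span_image_finset, hw.finrank_span_image_finset, hE, Fin.card_Ici, Fin.card_Iic,
      Fin.val_castSucc]
    omega
  · refine V.le_of_compression_of_ge_of_le hST (U := Submodule.span 𝕜 (v '' Finset.Iic i.succ))
      (W := Submodule.span 𝕜 (w '' Finset.Ici i)) ?_
      (fun x hx => hv.le_re_inner_map_self_of_mem_span hTv
        (fun j hj => hμ (Finset.mem_Iic.mp hj)) hx)
      (fun y hy => hw.re_inner_map_self_le_of_mem_span hSw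
        (fun j hj => hν (Finset.mem_Ici.mp hj)) hy)
    rw [hv.finrank_span_image_finset, hw.finrank_span_image_finset, hE, Fin.card_Iic, Fin.card_Ici,
      Fin.val_succ]
    omega

end LinearIsometry

theorem Fintype.exists_perm_comp_eq_of_map_univ_eq {ι α : Type*} [Fintype ι] {a b : ι → α}
    (h : Finset.univ.val.map a = Finset.univ.val.map b) : ∃ σ : Equiv.Perm ι, b ∘ σ = a := by
  classical
  refine ⟨Equiv.ofFiberEquiv fun c => Fintype.equivOfCardEq ?_, funext (Equiv.ofFiberEquiv_map _)⟩
  have hc := congrArg (Multiset.count c) h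
  rw [Multiset.count_map, Multiset.count_map, ← Finset.filter_val, ← Finset.filter_val,
    Finset.card_val, Finset.card_val] at hc
  simpa [Fintype.card_subtype, eq_comm] using hc

section Matrix

variable {𝕜 ι κ : Type*} [RCLike 𝕜] [Fintype ι] [DecidableEq ι] [Fintype κ] [DecidableEq κ]

theorem Matrix.IsHermitian.exists_orthonormal_eigenvectors_of_charpoly_eq {A : Matrix ι ι 𝕜}
    (hA : A.IsHermitian) {μ : ι → ℝ} (h : A.charpoly = ∏ i, (X - C (μ i : 𝕜))) :
    ∃ v : ι → EuclideanSpace 𝕜 ι, Orthonormal 𝕜 v ∧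
      ∀ i, toEuclideanLin A (v i) = (μ i : 𝕜) • v i := by
  have hroots : Finset.univ.val.map (RCLike.ofReal ∘ μ) =
      Finset.univ.val.map (RCLike.ofReal ∘ hA.eigenvalues : ι → 𝕜) := by
    rw [← hA.roots_charpoly_eq_eigenvalues, h,
      roots_prod _ _ (by simp [Finset.prod_ne_zero_iff, X_sub_C_ne_zero])]
    simp
  obtain ⟨σ, hσ⟩ := Fintype.exists_perm_comp_eq_of_map_univ_eq hroots
  refine ⟨hA.eigenvectorBasis ∘ σ, hA.eigenvectorBasis.orthonormal.comp σ σ.injective, fun i => ?_⟩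
  have hμ : (hA.eigenvalues (σ i) : 𝕜) = μ i := congrFun hσ i
  apply WithLp.ofLp_injective
  rw [Function.comp_apply, ofLp_toLpLin, toLin'_apply, mulVec_eigenvectorBasis, WithLp.ofLp_smul,
    ← hμ, RCLike.real_smul_eq_coe_smul (K := 𝕜)]

theorem Matrix.exists_linearIsometry_inner_toEuclideanLin_submatrix (A : Matrix ι ι 𝕜) {e : κ → ι}
    (he : Function.Injective e) :
    ∃ V : EuclideanSpace 𝕜 κ →ₗᵢ[𝕜] EuclideanSpace 𝕜 ι, ∀ y,
      ⟪toEuclideanLin (A.submatrix e e) y, y⟫_𝕜 = ⟪toEuclideanLin A (V y), V y⟫_𝕜 := by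
  set P : Matrix ι κ 𝕜 := (1 : Matrix ι ι 𝕜).submatrix id e
  have hPP : Pᴴ * P = 1 := by
    ext i j; simp [P, mul_apply, one_apply, he.eq_iff]
  have hPAP : Pᴴ * A * P = A.submatrix e e := by
    ext i j; simp [P, mul_apply, one_apply]
  have hadj : ∀ B : Matrix ι ι 𝕜, toEuclideanLin (Pᴴ * B * P) =
      (toEuclideanLin P).adjoint ∘ₗ toEuclideanLin B ∘ₗ toEuclideanLin P := by
    intro B
    rw [toLpLin_mul, toLpLin_mul, toEuclideanLin_conjTranspose_eq_adjoint]
    rfl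
  have hPP' : ∀ y, (toEuclideanLin P).adjoint (toEuclideanLin P y) = y := fun y => by
    simpa [hPP] using congrArg (· y) (hadj 1).symm
  refine ⟨(toEuclideanLin P).isometryOfInner fun x y => ?_, fun y => ?_⟩
  · rw [← LinearMap.adjoint_inner_right, hPP']
  · rw [← hPAP, hadj, LinearMap.comp_apply, LinearMap.adjoint_inner_left,
      LinearMap.coe_isometryOfInner]
    rfl

end Matrix

/-- Cauchy's interlacing theorem: the eigenvalues (in decreasing order, with
multiplicity) of a principal submatrix of a Hermitian matrix interlace those of the
matrix itself. -/
theorem stmt4 {n : ℕ} (M : Matrix (Fin (n + 1)) (Fin (n + 1)) ℂ) (hM : M.IsHermitian)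
    (k : Fin (n + 1))
    (μ : Fin (n + 1) → ℝ) (hμa : Antitone μ)
    (hμ : M.charpoly = ∏ i : Fin (n + 1), (X - C (μ i : ℂ)))
    (ν : Fin n → ℝ) (hνa : Antitone ν)
    (hν : (M.submatrix k.succAbove k.succAbove).charpoly
      = ∏ i : Fin n, (X - C (ν i : ℂ))) :
    ∀ i : Fin n, μ i.castSucc ≥ ν i ∧ ν i ≥ μ i.succ := by
  obtain ⟨V, hV⟩ :=
    M.exists_linearIsometry_inner_toEuclideanLin_submatrix k.succAbove_right_injective
  obtain ⟨v, hv, hMv⟩ := hM.exists_orthonormal_eigenvectors_of_charpoly_eq hμ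
  obtain ⟨w, hw, hNw⟩ :=
    (hM.submatrix k.succAbove).exists_orthonormal_eigenvectors_of_charpoly_eq hν
  exact V.interlacing_of_compression hV finrank_euclideanSpace_fin hv hμa hMv hw hνa hNw
end

section
/- Let A ∈ Mₙ(ℍ) be a quaternionic matrix and ι : Mₙ(ℍ) → M_{2n}(ℂ) the standard embedding. Then the characteristic polynomial of ι(A), which has degree 2n, factors as P(t)·conj(P)(t) for some monic complex polynomial P of degree n, where conj(P) is the polynomial obtained by conjugating all coefficients of P. In particular, the complex eigenvalues of ι(A) come in conjugate pairs, and every real eigenvalue of ι(A) has even multiplicity. -/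
open Matrix Polynomial

open Matrix

/-- The complex matrix `A₁` in the decomposition `A = A₁ + A₂ j` of a quaternionic
matrix, identifying `ℂ = ℝ + ℝi ⊆ ℍ`. -/
def qPart1 {n : ℕ} (A : Matrix (Fin n) (Fin n) (Quaternion ℝ)) :
    Matrix (Fin n) (Fin n) ℂ :=
  fun i j => ⟨(A i j).re, (A i j).imI⟩

/-- The complex matrix `A₂` in the decomposition `A = A₁ + A₂ j` of a quaternionic
matrix. -/
def qPart2 {n : ℕ} (A : Matrix (Fin n) (Fin n) (Quaternion ℝ)) :
    Matrix (Fin n) (Fin n) ℂ :=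
  fun i j => ⟨(A i j).imJ, (A i j).imK⟩

/-- The standard embedding `ι : Mₙ(ℍ) → M₂ₙ(ℂ)` sending `A = A₁ + A₂ j` to the
block matrix `(A₁, A₂; −conj A₂, conj A₁)`. -/
def qiota {n : ℕ} (A : Matrix (Fin n) (Fin n) (Quaternion ℝ)) :
    Matrix (Fin n ⊕ Fin n) (Fin n ⊕ Fin n) ℂ :=
  Matrix.fromBlocks (qPart1 A) (qPart2 A)
    (-(qPart2 A).map (starRingEnd ℂ)) ((qPart1 A).map (starRingEnd ℂ))

/-!
With `J = (0, -1; 1, 0)` one has `J · conj ι(A) = ι(A) · J` and `J · conj J = -1`. The first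
identity makes `ι(A)` similar to its conjugate, so its characteristic polynomial has real
coefficients. It also makes `x ↦ J · conj x` an antilinear map commuting with `ι(A)`, hence
preserving the generalized eigenspace of every real eigenvalue; there it squares to `-1`, which
forces even dimension: in a basis the map reads `x ↦ M · conj x` with `M · conj M = -1`, so
`|det M|² = (-1)^d`. Pairing each non-real root with its conjugate and halving the real ones
then produces `P`.
-/

open Module

theorem Multiset.exists_add_map_eq_of_involutive {α : Type*} [DecidableEq α] {σ : α → α}
    (hσ : Function.Involutive σ) (R : Multiset α) (hR : R.map σ = R)
    (heven : ∀ a, σ a = a → Even (R.count a)) : ∃ T : Multiset α, T + T.map σ = R := by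
  induction hcard : Multiset.card R using Nat.strong_induction_on generalizing R with
  | _ k ih =>
  obtain rfl | ⟨a, ha⟩ := R.empty_or_exists_mem
  · exact ⟨0, rfl⟩
  have hσa : σ a ∈ R.erase a := by
    by_cases hfix : σ a = a
    · rw [hfix, ← Multiset.count_pos, Multiset.count_erase_self]
      obtain ⟨c, hc⟩ := heven a hfix
      have := Multiset.count_pos.mpr ha
      omega
    · exact (Multiset.mem_erase_of_ne hfix).mpr (hR ▸ Multiset.mem_map_of_mem σ ha)
  set R' := (R.erase a).erase (σ a)
  have hsplit : R = a ::ₘ σ a ::ₘ R' := by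
    rw [Multiset.cons_erase hσa, Multiset.cons_erase ha]
  have hR' : R'.map σ = R' := by
    have h := hR
    rw [hsplit, Multiset.map_cons, Multiset.map_cons, hσ a, Multiset.cons_swap] at h
    exact (Multiset.cons_inj_right _).mp ((Multiset.cons_inj_right _).mp h)
  have heven' : ∀ b, σ b = b → Even (R'.count b) := by
    intro b hb
    have hab : b = a ↔ b = σ a :=
      ⟨fun h => by rw [h] at hb ⊢; exact hb.symm, fun h => by rw [← hb, h, hσ a]⟩
    have h := heven b hb
    rw [hsplit, Multiset.count_cons, Multiset.count_cons] at h
    by_cases hba : b = a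
    · rw [if_pos hba, if_pos (hab.mp hba), add_assoc] at h
      exact (Nat.even_add.mp h).mpr even_two
    · rwa [if_neg hba, if_neg (mt hab.mpr hba)] at h
  have hlt : Multiset.card R' < k := by
    rw [← hcard, hsplit]
    simp
  obtain ⟨T', hT'⟩ := ih _ hlt R' hR' heven' rfl
  refine ⟨a ::ₘ T', ?_⟩
  rw [hsplit, Multiset.map_cons, Multiset.cons_add, Multiset.add_cons, hT']

theorem Polynomial.exists_monic_eq_mul_map_of_involutive {K : Type*} [Field K] [IsAlgClosed K]
    {σ : K →+* K} (hσ : Function.Involutive σ) {q : K[X]} (hq : q.Monic) (hqσ : q.map σ = q)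
    (heven : ∀ a, σ a = a → Even (q.rootMultiplicity a)) :
    ∃ P : K[X], P.Monic ∧ q = P * P.map σ := by
  classical
  have hroots : q.roots.map σ = q.roots := by
    rw [← (IsAlgClosed.splits q).roots_map σ, hqσ]
  obtain ⟨T, hT⟩ := q.roots.exists_add_map_eq_of_involutive hσ hroots
    fun a ha => by rw [count_roots]; exact heven a ha
  refine ⟨(T.map (X - C ·)).prod,
    monic_multiset_prod_of_monic _ _ fun a _ => monic_X_sub_C a, ?_⟩
  have hmap : (T.map (X - C ·)).map (map σ) = (T.map σ).map (X - C ·) := by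
    simp only [Multiset.map_map, Function.comp_def, Polynomial.map_sub, map_X, map_C]
  rw [Polynomial.map_multiset_prod, hmap, ← Multiset.prod_add, ← Multiset.map_add, hT]
  exact (prod_multiset_X_sub_C_of_monic_of_roots_card_eq hq
    IsAlgClosed.card_roots_eq_natDegree).symm

theorem Matrix.star_mulVec_eq_map_mulVec {m n α : Type*} [Fintype n] [CommSemiring α]
    [StarRing α] (M : Matrix m n α) (v : n → α) :
    star (M *ᵥ v) = M.map (starRingEnd α) *ᵥ star v := by
  ext
  simp [mulVec, dotProduct, starRingEnd_apply]

theorem Matrix.even_card_of_mul_map_conj_eq_neg_one {m : Type*} [Fintype m] [DecidableEq m]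
    {M : Matrix m m ℂ} (hM : M * M.map (starRingEnd ℂ) = -1) : Even (Fintype.card m) := by
  have hdet : starRingEnd ℂ M.det * M.det = (-1) ^ Fintype.card m := by
    rw [mul_comm, RingHom.map_det, ← det_mul]
    exact (congrArg det hM).trans (by rw [det_neg, det_one, mul_one])
  refine (Nat.even_or_odd _).resolve_right fun hodd => ?_
  rw [hodd.neg_one_pow, ← Complex.normSq_eq_conj_mul_self] at hdet
  have := Complex.normSq_nonneg M.det
  have := congrArg Complex.re hdet
  simp only [Complex.ofReal_re, Complex.neg_re, Complex.one_re] at this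
  linarith

theorem Module.even_finrank_of_starLinear_sq_eq_neg {V : Type*} [AddCommGroup V] [Module ℂ V]
    [FiniteDimensional ℂ V] (φ : V →ₗ⋆[ℂ] V) (hφ : ∀ x, φ (φ x) = -x) :
    Even (finrank ℂ V) := by
  set b := Module.finBasis ℂ V
  let M : Matrix (Fin (finrank ℂ V)) (Fin (finrank ℂ V)) ℂ := fun i j => b.repr (φ (b j)) i
  have hrepr : ∀ x, ⇑(b.repr (φ x)) = M *ᵥ star ⇑(b.repr x) := by
    intro x
    have hx : φ x = ∑ j, star (b.repr x j) • φ (b j) := by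
      conv_lhs => rw [← b.sum_repr x, map_sum]
      simp only [LinearMap.map_smulₛₗ, starRingEnd_apply]
    ext i
    simp [hx, M, mulVec, dotProduct, mul_comm]
  have hM : M * M.map (starRingEnd ℂ) = -1 := by
    refine ext_iff_mulVec.mpr fun v => ?_
    have hv : ⇑(b.repr (b.equivFun.symm v)) = v := b.equivFun.apply_symm_apply v
    have h := hrepr (φ (b.equivFun.symm v))
    rw [hφ, hrepr, star_mulVec_eq_map_mulVec, star_star, hv, mulVec_mulVec, map_neg,
      Finsupp.coe_neg, hv] at h
    rw [← h, neg_mulVec, one_mulVec]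
  simpa using even_card_of_mul_map_conj_eq_neg_one hM

theorem Module.End.mapsTo_maxGenEigenspace_of_semilinear_comm {R M : Type*} [CommRing R]
    [AddCommGroup M] [Module R M] {σ : R →+* R} (φ : M →ₛₗ[σ] M) {f : End R M}
    (hcomm : ∀ x, φ (f x) = f (φ x)) {μ : R} (hμ : σ μ = μ) :
    Set.MapsTo φ (f.maxGenEigenspace μ) (f.maxGenEigenspace μ) := by
  have hpow : ∀ (k : ℕ) x,
      φ (((f - μ • 1 : End R M) ^ k) x) = ((f - μ • 1 : End R M) ^ k) (φ x) := by
    intro k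
    induction k with
    | zero => simp
    | succ k ih => intro x; simp [pow_succ', ih, hcomm, hμ]
  intro x hx
  obtain ⟨k, hk⟩ := (mem_maxGenEigenspace _ _ _).mp hx
  exact (mem_maxGenEigenspace _ _ _).mpr ⟨k, by rw [← hpow, hk, map_zero]⟩

namespace Matrix

variable {m : Type*} [Fintype m]

def mulVecStar (J : Matrix m m ℂ) : (m → ℂ) →ₗ⋆[ℂ] (m → ℂ) where
  toFun x := J *ᵥ star x
  map_add' x y := by simp [mulVec_add]
  map_smul' c x := by simp [mulVec_smul]

theorem mulVecStar_apply (J : Matrix m m ℂ) (x : m → ℂ) : J.mulVecStar x = J *ᵥ star x :=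
  rfl

theorem mulVecStar_mulVecStar [DecidableEq m] {J : Matrix m m ℂ}
    (hJ : J * J.map (starRingEnd ℂ) = -1) (x : m → ℂ) :
    J.mulVecStar (J.mulVecStar x) = -x := by
  rw [mulVecStar_apply, mulVecStar_apply, star_mulVec_eq_map_mulVec, star_star, mulVec_mulVec, hJ,
    neg_mulVec, one_mulVec]

theorem mulVecStar_mulVec {J B : Matrix m m ℂ} (hB : J * B.map (starRingEnd ℂ) = B * J)
    (x : m → ℂ) : J.mulVecStar (B *ᵥ x) = B *ᵥ J.mulVecStar x := by
  rw [mulVecStar_apply, mulVecStar_apply, star_mulVec_eq_map_mulVec, mulVec_mulVec, hB,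
    mulVec_mulVec]

variable [DecidableEq m] {J B : Matrix m m ℂ} (hJ : J * J.map (starRingEnd ℂ) = -1)
  (hB : J * B.map (starRingEnd ℂ) = B * J)
include hJ hB

theorem charpoly_map_conj_of_mul_map_conj : B.charpoly.map (starRingEnd ℂ) = B.charpoly := by
  have hinv : -J.map (starRingEnd ℂ) * J = 1 := mul_eq_one_comm.mp (by rw [mul_neg, hJ, neg_neg])
  calc B.charpoly.map (starRingEnd ℂ)
      = (B.map (starRingEnd ℂ)).charpoly := (charpoly_map B _).symm
    _ = (-J.map (starRingEnd ℂ) * B * J).charpoly := by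
      rw [Matrix.mul_assoc, ← hB, ← Matrix.mul_assoc, hinv, Matrix.one_mul]
    _ = B.charpoly := by
      rw [charpoly_mul_comm, ← Matrix.mul_assoc, mul_neg, hJ, neg_neg, Matrix.one_mul]

theorem even_rootMultiplicity_charpoly_of_mul_map_conj (r : ℝ) :
    Even (B.charpoly.rootMultiplicity (r : ℂ)) := by
  have hmaps := Module.End.mapsTo_maxGenEigenspace_of_semilinear_comm J.mulVecStar
    (f := toLin' B) (mulVecStar_mulVec hB) (Complex.conj_ofReal r)
  rw [← charpoly_toLin', ← LinearMap.finrank_maxGenEigenspace_eq]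
  exact Module.even_finrank_of_starLinear_sq_eq_neg (J.mulVecStar.restrict hmaps)
    fun x => Subtype.ext (mulVecStar_mulVecStar hJ x)

end Matrix

theorem J_mul_map_conj_qiota {n : ℕ} (A : Matrix (Fin n) (Fin n) (Quaternion ℝ)) :
    J (Fin n) ℂ * (qiota A).map (starRingEnd ℂ) = qiota A * J (Fin n) ℂ := by
  simp only [J, qiota, fromBlocks_map, fromBlocks_multiply]
  ext (i | i) (j | j) <;> simp

/-- The characteristic polynomial of `ι(A)` factors as `P · conj P` with `P` monic of
degree `n`; in particular every real eigenvalue of `ι(A)` has even multiplicity. -/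
theorem stmt8 {n : ℕ} (A : Matrix (Fin n) (Fin n) (Quaternion ℝ)) :
    ∃ P : Polynomial ℂ, P.Monic ∧ P.natDegree = n ∧
      (qiota A).charpoly = P * P.map (starRingEnd ℂ) ∧
      ∀ r : ℝ, Even (Polynomial.rootMultiplicity (r : ℂ) (qiota A).charpoly) := by
  have hJ : J (Fin n) ℂ * (J (Fin n) ℂ).map (starRingEnd ℂ) = -1 := by rw [map_J, J_squared]
  have hB := J_mul_map_conj_qiota A
  have heven := even_rootMultiplicity_charpoly_of_mul_map_conj hJ hB
  obtain ⟨P, hP, hfactor⟩ := exists_monic_eq_mul_map_of_involutive (σ := starRingEnd ℂ)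
    star_involutive (charpoly_monic _) (charpoly_map_conj_of_mul_map_conj hJ hB)
    fun a ha => by
      obtain ⟨r, rfl⟩ := Complex.conj_eq_iff_real.mp ha
      exact heven r
  refine ⟨P, hP, ?_, hfactor, heven⟩
  have hdeg := congrArg natDegree hfactor
  rw [charpoly_natDegree_eq_dim, hP.natDegree_mul (hP.map _), natDegree_map,
    Fintype.card_sum, Fintype.card_fin] at hdeg
  omega
end
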